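/- For the dyad of Rössler systems coupled via the variable z with coupling strength ρ, let Φ : ℝ⁶ → ℝ⁶ be the observability map obtained by measuring y at both nodes, namely Φ = (y₁, L_F y₁, L_F² y₁, y₂, L_F y₂, L_F² y₂). Then the observability determinant det DΦ(p) equals 1 at every point p ∈ ℝ⁶; in particular the dyad is fully observable from measuring y at each node, independently of the value of ρ. -/

import Mathlib

/-- The `k`-th Lie derivative of a scalar function `h` along a vector field `F`. -/
noncomputable def lieD {E : Type*} [NormedAddCommGroup E] [NormedSpace ℝ E]
    (F : E → E) (k : ℕ) (h : E → ℝ) : E → ℝ :=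
  match k with
  | 0 => h
  | k + 1 => fun p => fderiv ℝ (lieD F k h) p (F p)

/-- The observability determinant of a map `Φ` at a point `p`:
the determinant of the Jacobian (Fréchet derivative) of `Φ` at `p`. -/
noncomputable def obsDet {E : Type*} [NormedAddCommGroup E] [NormedSpace ℝ E]
    (Φ : E → E) (p : E) : ℝ :=
  LinearMap.det ((fderiv ℝ Φ p).toLinearMap)

/-- The Rössler vector field with parameters `a b c`, coordinates `(x, y, z)`. -/
def rossler (a b c : ℝ) (p : Fin 3 → ℝ) : Fin 3 → ℝ :=
  ![-p 1 - p 2, p 0 + a * p 1, b + p 2 * (p 0 - c)]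

/-- Dyad of Rössler systems coupled via the variable `z` with coupling strength `ρ`;
coordinates `(x₁, y₁, z₁, x₂, y₂, z₂)`. -/
def dyadZ (a b c ρ : ℝ) (p : Fin 6 → ℝ) : Fin 6 → ℝ :=
  ![-p 1 - p 2,
    p 0 + a * p 1,
    b + p 2 * (p 0 - c) + ρ * (p 5 - p 2),
    -p 4 - p 5,
    p 3 + a * p 4,
    b + p 5 * (p 3 - c) + ρ * (p 2 - p 5)]

/-- Observability map measuring `y` at both nodes:
`Φ = (y₁, L_F y₁, L_F² y₁, y₂, L_F y₂, L_F² y₂)`. -/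
noncomputable def PhiY3Y3 (F : (Fin 6 → ℝ) → (Fin 6 → ℝ)) (q : Fin 6 → ℝ) : Fin 6 → ℝ :=
  ![lieD F 0 (fun r => r 1) q,
    lieD F 1 (fun r => r 1) q,
    lieD F 2 (fun r => r 1) q,
    lieD F 0 (fun r => r 4) q,
    lieD F 1 (fun r => r 4) q,
    lieD F 2 (fun r => r 4) q]


section cv
variable {α : Type*} (x0 x1 x2 x3 x4 x5 : α)
lemma cv0 : ![x0,x1,x2,x3,x4,x5] 0 = x0 := rfl
lemma cv1 : ![x0,x1,x2,x3,x4,x5] 1 = x1 := rfl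
lemma cv2 : ![x0,x1,x2,x3,x4,x5] 2 = x2 := rfl
lemma cv3 : ![x0,x1,x2,x3,x4,x5] 3 = x3 := rfl
lemma cv4 : ![x0,x1,x2,x3,x4,x5] 4 = x4 := rfl
lemma cv5 : ![x0,x1,x2,x3,x4,x5] 5 = x5 := rfl
lemma cvm0 {h} : ![x0,x1,x2,x3,x4,x5] ⟨0,h⟩ = x0 := rfl
lemma cvm1 {h} : ![x0,x1,x2,x3,x4,x5] ⟨1,h⟩ = x1 := rfl
lemma cvm2 {h} : ![x0,x1,x2,x3,x4,x5] ⟨2,h⟩ = x2 := rfl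
lemma cvm3 {h} : ![x0,x1,x2,x3,x4,x5] ⟨3,h⟩ = x3 := rfl
lemma cvm4 {h} : ![x0,x1,x2,x3,x4,x5] ⟨4,h⟩ = x4 := rfl
lemma cvm5 {h} : ![x0,x1,x2,x3,x4,x5] ⟨5,h⟩ = x5 := rfl
end cv

/-- auxiliary: the sum-of-two-projections CLM. -/
noncomputable def projL2 (a : ℝ) (i j : Fin 6) : (Fin 6 → ℝ) →L[ℝ] ℝ :=
  ContinuousLinearMap.proj i + a • ContinuousLinearMap.proj j

lemma lieD_one (F : (Fin 6 → ℝ) → (Fin 6 → ℝ)) (i : Fin 6) :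
    lieD F 1 (fun r => r i) = fun q => F q i := by
  funext q
  have h : (fun r : Fin 6 → ℝ => r i)
      = ⇑(ContinuousLinearMap.proj (R := ℝ) (φ := fun _ : Fin 6 => ℝ) i) := rfl
  simp only [lieD, h, ContinuousLinearMap.fderiv]
  rfl

/-- the explicit Jacobian matrix -/
def jacM (a : ℝ) : Matrix (Fin 6) (Fin 6) ℝ :=
  !![0,1,0,0,0,0; 1,a,0,0,0,0; a,a^2-1,-1,0,0,0;
     0,0,0,0,1,0; 0,0,0,1,a,0; 0,0,0,a,a^2-1,-1]

lemma lieD2_y1 (a b c ρ : ℝ) :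
    lieD (dyadZ a b c ρ) 2 (fun r => r 1)
      = fun q => a * q 0 + (a^2 - 1) * q 1 - q 2 := by
  funext q
  show fderiv ℝ (lieD (dyadZ a b c ρ) 1 (fun r => r 1)) q (dyadZ a b c ρ q) = _
  rw [lieD_one]
  have h1 : (fun q : Fin 6 → ℝ => dyadZ a b c ρ q 1) = ⇑(projL2 a 0 1) := by
    funext r; simp [dyadZ, projL2]
  rw [h1, ContinuousLinearMap.fderiv]
  simp [projL2, dyadZ]
  ring

lemma lieD2_y2 (a b c ρ : ℝ) :
    lieD (dyadZ a b c ρ) 2 (fun r => r 4)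
      = fun q => a * q 3 + (a^2 - 1) * q 4 - q 5 := by
  funext q
  show fderiv ℝ (lieD (dyadZ a b c ρ) 1 (fun r => r 4)) q (dyadZ a b c ρ q) = _
  rw [lieD_one]
  have h1 : (fun q : Fin 6 → ℝ => dyadZ a b c ρ q 4) = ⇑(projL2 a 3 4) := by
    funext r; simp [dyadZ, projL2]
  rw [h1, ContinuousLinearMap.fderiv]
  simp [projL2, dyadZ]
  ring

lemma phi_eq (a b c ρ : ℝ) :
    PhiY3Y3 (dyadZ a b c ρ) = fun q => (jacM a).mulVec q := by
  funext q
  show ![lieD (dyadZ a b c ρ) 0 (fun r => r 1) q, lieD (dyadZ a b c ρ) 1 (fun r => r 1) q,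
    lieD (dyadZ a b c ρ) 2 (fun r => r 1) q, lieD (dyadZ a b c ρ) 0 (fun r => r 4) q,
    lieD (dyadZ a b c ρ) 1 (fun r => r 4) q, lieD (dyadZ a b c ρ) 2 (fun r => r 4) q] = _
  rw [lieD2_y1, lieD2_y2, lieD_one, lieD_one]
  funext i
  fin_cases i <;>
    · simp only [lieD, dyadZ, jacM, Matrix.mulVec, dotProduct, Fin.sum_univ_six,
        Matrix.of_apply, cv0, cv1, cv2, cv3, cv4, cv5, cvm0, cvm1, cvm2, cvm3, cvm4, cvm5]
      ring

set_option maxRecDepth 8000 in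
/-- For the `z`-coupled dyad of Rössler systems, the observability determinant of
`Φ = (y₁, L_F y₁, L_F² y₁, y₂, L_F y₂, L_F² y₂)` equals `1` everywhere: the dyad is
fully observable from measuring `y` at each node, independently of `ρ`. -/
theorem dyadZ_obsDet_y3y3 (a b c ρ : ℝ) (p : Fin 6 → ℝ) :
    obsDet (PhiY3Y3 (dyadZ a b c ρ)) p = 1 := by
  rw [obsDet, phi_eq]
  have h : (fun q : Fin 6 → ℝ => (jacM a).mulVec q)
      = ⇑(LinearMap.toContinuousLinearMap ((jacM a).mulVecLin)) := rfl
  rw [h, ContinuousLinearMap.fderiv]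
  have h2 : (LinearMap.toContinuousLinearMap ((jacM a).mulVecLin)).toLinearMap
      = Matrix.toLin' (jacM a) := rfl
  rw [h2, LinearMap.det_toLin']
  simp [jacM, Matrix.det_succ_row_zero, Fin.sum_univ_succ, Fin.succAbove]
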